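/- Let k ≥ 1 and n ≥ 1. A function f : 𝔗^n → ℝ is k-submodular if and only if the inequality f(T ⊓ U) + f(T ⊔ U) ≤ f(T) + f(U) holds (i) for all compatible T, U ∈ 𝔗^n, and (ii) for all T, U ∈ 𝔗^n that are ī-similar for some i ∈ {1,…,n} with T_i and U_i two distinct leaves. -/
import Mathlib


/-- The star tree `𝔗` with `k` leaves: `none` is the root `o`, `some ℓ` the leaves. -/
abbrev KTree (k : ℕ) := Option (Fin k)

/-- The intersection `⊓` on `𝔗`. -/
def tmeet {k : ℕ} (a b : KTree k) : KTree k := if a = b then a else none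

/-- The union `⊔` on `𝔗`. -/
def tjoin {k : ℕ} : KTree k → KTree k → KTree k
  | none, b => b
  | a, none => a
  | some p, some q => if p = q then some p else none

/-- Componentwise intersection on `𝔗^n`. -/
def vmeet {k n : ℕ} (T U : Fin n → KTree k) : Fin n → KTree k := fun i => tmeet (T i) (U i)

/-- Componentwise union on `𝔗^n`. -/
def vjoin {k n : ℕ} (T U : Fin n → KTree k) : Fin n → KTree k := fun i => tjoin (T i) (U i)

/-- `f : 𝔗^n → ℝ` is `k`-submodular. -/
def KSubmodular {k n : ℕ} (f : (Fin n → KTree k) → ℝ) : Prop :=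
  ∀ T U, f (vmeet T U) + f (vjoin T U) ≤ f T + f U

/-- The function `\overline{(x,L)} : 𝔗^n → ℝ`. -/
def obar {k n : ℕ} (x : Fin n → ℝ) (L : Fin n → Fin k) (T : Fin n → KTree k) : ℝ :=
  ∑ i, Option.elim (T i) 0 (fun ℓ => if ℓ = L i then x i else -x i)

/-- Membership `(x,L) ∈ U(f)`. -/
def memU {k n : ℕ} (f : (Fin n → KTree k) → ℝ) (x : Fin n → ℝ) (L : Fin n → Fin k) : Prop :=
  (∀ i, 0 ≤ x i) ∧ ∀ T, obar x L T ≤ f T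

/-- The `L¹`-norm `‖x‖`. -/
def nrm {n : ℕ} (x : Fin n → ℝ) : ℝ := ∑ i, x i

/-- `T` and `U` are compatible: in each coordinate at most one leaf appears. -/
def Compatible {k n : ℕ} (T U : Fin n → KTree k) : Prop :=
  ∀ i, T i = none ∨ U i = none ∨ T i = U i

/-- `T` and `U` are `ī`-similar: they agree outside coordinate `i`. -/
def ISimilar {k n : ℕ} (i : Fin n) (T U : Fin n → KTree k) : Prop :=
  ∀ j, j ≠ i → T j = U j

lemma tmeet_self' {k : ℕ} (a : KTree k) : tmeet a a = a := if_pos rfl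
lemma tmeet_none_left' {k : ℕ} (b : KTree k) : tmeet none b = none := by
  unfold tmeet; split <;> rfl
lemma tmeet_none_right' {k : ℕ} (a : KTree k) : tmeet a none = none := by
  cases a <;> simp [tmeet]
lemma tmeet_ss' {k : ℕ} {p q : Fin k} (h : p ≠ q) : tmeet (some p) (some q) = none := by
  simp [tmeet, h]
lemma tjoin_none_left' {k : ℕ} (b : KTree k) : tjoin none b = b := by cases b <;> rfl
lemma tjoin_none_right' {k : ℕ} (a : KTree k) : tjoin a none = a := by cases a <;> rfl
lemma tjoin_self' {k : ℕ} (a : KTree k) : tjoin a a = a := by cases a <;> simp [tjoin]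
lemma tjoin_ss' {k : ℕ} {p q : Fin k} (h : p ≠ q) : tjoin (some p) (some q) = none := by
  simp [tjoin, h]

lemma lemBbase {k n : ℕ} (f : (Fin n → KTree k) → ℝ)
    (Hii : ∀ (i : Fin n) (T U : Fin n → KTree k) (p q : Fin k), ISimilar i T U →
          T i = some p → U i = some q → p ≠ q →
          f (vmeet T U) + f (vjoin T U) ≤ f T + f U)
    (A U : Fin n → KTree k) (i : Fin n) (p q : Fin k)
    (hAU : ∀ l, l ≠ i → A l = U l)
    (hA : A i = none) (hU : U i = some q) (hpq : p ≠ q) :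
    f A + f (Function.update U i none) ≤ f (Function.update A i (some p)) + f U := by
  have hA0 : A = Function.update U i none := by
    funext l
    by_cases hl : l = i
    · subst hl; simp [hA]
    · simp [Function.update_of_ne hl, hAU l hl]
  have h2 : Function.update A i (some p) = Function.update U i (some p) := by
    rw [hA0]; simp
  have hm : vmeet (Function.update U i (some p)) U = Function.update U i none := by
    funext l
    by_cases hl : l = i
    · subst hl; simp [vmeet, hU, tmeet_ss' hpq]
    · simp [vmeet, Function.update_of_ne hl, tmeet_self']
  have hj : vjoin (Function.update U i (some p)) U = Function.update U i none := by
    funext l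
    by_cases hl : l = i
    · subst hl; simp [vjoin, hU, tjoin_ss' hpq]
    · simp [vjoin, Function.update_of_ne hl, tjoin_self']
  have key := Hii i (Function.update U i (some p)) U p q
    (fun j hj => Function.update_of_ne hj _ _) (Function.update_self _ _ _) hU hpq
  rw [hm, hj] at key
  rw [h2, hA0]
  linarith

lemma lemB {k n : ℕ} (f : (Fin n → KTree k) → ℝ)
    (Hi : ∀ T U, Compatible T U → f (vmeet T U) + f (vjoin T U) ≤ f T + f U)
    (Hii : ∀ (i : Fin n) (T U : Fin n → KTree k) (p q : Fin k), ISimilar i T U →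
          T i = some p → U i = some q → p ≠ q →
          f (vmeet T U) + f (vjoin T U) ≤ f T + f U) :
    ∀ (m : ℕ) (A U : Fin n → KTree k) (i : Fin n) (p q : Fin k),
      (Finset.univ.filter (fun l => l ≠ i ∧ A l ≠ U l)).card ≤ m →
      Compatible A U → A i = none → U i = some q → p ≠ q →
      f A + f (Function.update U i none) ≤ f (Function.update A i (some p)) + f U := by
  intro m
  induction m with
  | zero =>
    intro A U i p q hcard _ hA hU hpq
    apply lemBbase f Hii A U i p q _ hA hU hpq
    intro l hl
    by_contra hne
    have hmem : l ∈ Finset.univ.filter (fun l => l ≠ i ∧ A l ≠ U l) := by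
      simp [hl, hne]
    rw [Finset.card_eq_zero.mp (Nat.le_zero.mp hcard)] at hmem
    exact absurd hmem (Finset.notMem_empty l)
  | succ m ih =>
    intro A U i p q hcard hcomp hA hU hpq
    rcases Finset.eq_empty_or_nonempty
        (Finset.univ.filter (fun l => l ≠ i ∧ A l ≠ U l)) with hemp | ⟨l, hl⟩
    · apply lemBbase f Hii A U i p q _ hA hU hpq
      intro l hl
      by_contra hne
      have hmem : l ∈ Finset.univ.filter (fun l => l ≠ i ∧ A l ≠ U l) := by
        simp [hl, hne]
      rw [hemp] at hmem
      exact absurd hmem (Finset.notMem_empty l)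
    · simp only [Finset.mem_filter, Finset.mem_univ, true_and] at hl
      obtain ⟨hli, hne⟩ := hl
      have hlmem : l ∈ Finset.univ.filter (fun x => x ≠ i ∧ A x ≠ U x) := by
        simp [hli, hne]
      have herase : ((Finset.univ.filter (fun x => x ≠ i ∧ A x ≠ U x)).erase l).card ≤ m := by
        rw [Finset.card_erase_of_mem hlmem]
        have := hcard
        omega
      rcases hcomp l with hAl | hUl | heq
      · -- case (b) : A l = none, U l = some r ; bump A at l
        have hUlne : U l ≠ none := fun h => hne (by rw [hAl, h])
        obtain ⟨r, hUl⟩ := Option.ne_none_iff_exists'.mp hUlne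
        obtain ⟨A', hA'l, hA'x⟩ :
            ∃ A' : Fin n → KTree k, A' l = some r ∧ ∀ x, x ≠ l → A' x = A x :=
          ⟨Function.update A l (some r), Function.update_self _ _ _,
            fun x hx => Function.update_of_ne hx _ _⟩
        have hA'i : A' i = none := by rw [hA'x i (Ne.symm hli), hA]
        have hcomp' : Compatible A' U := by
          intro x
          by_cases hx : x = l
          · subst hx; right; right; rw [hA'l, hUl]
          · rw [hA'x x hx]; exact hcomp x
        have hsub : (Finset.univ.filter (fun x => x ≠ i ∧ A' x ≠ U x)) ⊆
            (Finset.univ.filter (fun x => x ≠ i ∧ A x ≠ U x)).erase l := by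
          intro x hx
          simp only [Finset.mem_filter, Finset.mem_univ, true_and] at hx
          obtain ⟨hxi, hxd⟩ := hx
          have hxl : x ≠ l := fun h => by
            subst h; exact hxd (by rw [hA'l, hUl])
          refine Finset.mem_erase.mpr ⟨hxl, ?_⟩
          simp only [Finset.mem_filter, Finset.mem_univ, true_and]
          exact ⟨hxi, by rwa [hA'x x hxl] at hxd⟩
        have hihyp := ih A' U i p q (le_trans (Finset.card_le_card hsub) herase)
          hcomp' hA'i hU hpq
        have hc2 : Compatible (Function.update A i (some p)) A' := by
          intro x
          by_cases hx : x = i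
          · subst hx; right; left; exact hA'i
          · rw [Function.update_of_ne hx]
            by_cases hxl : x = l
            · subst hxl; left; exact hAl
            · right; right; rw [hA'x x hxl]
        have hm2 : vmeet (Function.update A i (some p)) A' = A := by
          funext x
          show tmeet (Function.update A i (some p) x) (A' x) = A x
          by_cases hx : x = i
          · subst hx
            rw [Function.update_self, hA'i, tmeet_none_right', hA]
          · rw [Function.update_of_ne hx]
            by_cases hxl : x = l
            · subst hxl; rw [hAl, tmeet_none_left']
            · rw [hA'x x hxl, tmeet_self']
        have hj2 : vjoin (Function.update A i (some p)) A' =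
            Function.update A' i (some p) := by
          funext x
          show tjoin (Function.update A i (some p) x) (A' x) =
            Function.update A' i (some p) x
          by_cases hx : x = i
          · subst hx
            rw [Function.update_self, Function.update_self, hA'i, tjoin_none_right']
          · rw [Function.update_of_ne hx, Function.update_of_ne hx]
            by_cases hxl : x = l
            · subst hxl; rw [hAl, hA'l, tjoin_none_left']
            · rw [hA'x x hxl, tjoin_self']
        have key := Hi (Function.update A i (some p)) A' hc2
        rw [hm2, hj2] at key
        linarith
      · -- case (a) : U l = none, A l = some r ; bump U at l
        have hAlne : A l ≠ none := fun h => hne (by rw [hUl, h])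
        obtain ⟨r, hAl⟩ := Option.ne_none_iff_exists'.mp hAlne
        obtain ⟨U', hU'l, hU'x⟩ :
            ∃ U' : Fin n → KTree k, U' l = some r ∧ ∀ x, x ≠ l → U' x = U x :=
          ⟨Function.update U l (some r), Function.update_self _ _ _,
            fun x hx => Function.update_of_ne hx _ _⟩
        have hU'i : U' i = some q := by rw [hU'x i (Ne.symm hli), hU]
        have hcomp' : Compatible A U' := by
          intro x
          by_cases hx : x = l
          · subst hx; right; right; rw [hU'l, hAl]
          · rw [hU'x x hx]; exact hcomp x
        have hsub : (Finset.univ.filter (fun x => x ≠ i ∧ A x ≠ U' x)) ⊆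
            (Finset.univ.filter (fun x => x ≠ i ∧ A x ≠ U x)).erase l := by
          intro x hx
          simp only [Finset.mem_filter, Finset.mem_univ, true_and] at hx
          obtain ⟨hxi, hxd⟩ := hx
          have hxl : x ≠ l := fun h => by
            subst h; exact hxd (by rw [hU'l, hAl])
          refine Finset.mem_erase.mpr ⟨hxl, ?_⟩
          simp only [Finset.mem_filter, Finset.mem_univ, true_and]
          exact ⟨hxi, by rwa [hU'x x hxl] at hxd⟩
        have hihyp := ih A U' i p q (le_trans (Finset.card_le_card hsub) herase)
          hcomp' hA hU'i hpq
        have hc2 : Compatible (Function.update U' i none) U := by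
          intro x
          by_cases hx : x = i
          · subst hx; left; exact Function.update_self _ _ _
          · rw [Function.update_of_ne hx]
            by_cases hxl : x = l
            · subst hxl; right; left; exact hUl
            · right; right; rw [hU'x x hxl]
        have hm2 : vmeet (Function.update U' i none) U = Function.update U i none := by
          funext x
          show tmeet (Function.update U' i none x) (U x) = Function.update U i none x
          by_cases hx : x = i
          · subst hx
            rw [Function.update_self, Function.update_self, tmeet_none_left']
          · rw [Function.update_of_ne hx, Function.update_of_ne hx]
            by_cases hxl : x = l
            · subst hxl; rw [hU'l, hUl, tmeet_none_right']
            · rw [hU'x x hxl, tmeet_self']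
        have hj2 : vjoin (Function.update U' i none) U = U' := by
          funext x
          show tjoin (Function.update U' i none x) (U x) = U' x
          by_cases hx : x = i
          · subst hx
            rw [Function.update_self, tjoin_none_left', hU, hU'i]
          · rw [Function.update_of_ne hx]
            by_cases hxl : x = l
            · subst hxl; rw [hU'l, hUl, tjoin_none_right']
            · rw [hU'x x hxl, tjoin_self']
        have key := Hi (Function.update U' i none) U hc2
        rw [hm2, hj2] at key
        linarith
      · exact absurd heq hne

lemma mainLem {k n : ℕ} (f : (Fin n → KTree k) → ℝ)
    (Hi : ∀ T U, Compatible T U → f (vmeet T U) + f (vjoin T U) ≤ f T + f U)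
    (Hii : ∀ (i : Fin n) (T U : Fin n → KTree k) (p q : Fin k), ISimilar i T U →
          T i = some p → U i = some q → p ≠ q →
          f (vmeet T U) + f (vjoin T U) ≤ f T + f U) :
    ∀ (d : ℕ) (T U : Fin n → KTree k),
      (Finset.univ.filter (fun l => T l ≠ none ∧ U l ≠ none ∧ T l ≠ U l)).card ≤ d →
      f (vmeet T U) + f (vjoin T U) ≤ f T + f U := by
  have compat_of_empty : ∀ T U : Fin n → KTree k,
      (Finset.univ.filter (fun l => T l ≠ none ∧ U l ≠ none ∧ T l ≠ U l)) = ∅ →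
      Compatible T U := by
    intro T U hemp x
    by_contra hx
    push_neg at hx
    have hmem : x ∈ Finset.univ.filter (fun l => T l ≠ none ∧ U l ≠ none ∧ T l ≠ U l) := by
      simp only [Finset.mem_filter, Finset.mem_univ, true_and]
      exact ⟨hx.1, hx.2.1, hx.2.2⟩
    rw [hemp] at hmem
    exact absurd hmem (Finset.notMem_empty x)
  intro d
  induction d with
  | zero =>
    intro T U hcard
    exact Hi T U (compat_of_empty T U (Finset.card_eq_zero.mp (Nat.le_zero.mp hcard)))
  | succ d ih =>
    intro T U hcard
    rcases Finset.eq_empty_or_nonempty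
        (Finset.univ.filter (fun l => T l ≠ none ∧ U l ≠ none ∧ T l ≠ U l)) with hemp | ⟨i, hi⟩
    · exact Hi T U (compat_of_empty T U hemp)
    · have himem := hi
      simp only [Finset.mem_filter, Finset.mem_univ, true_and] at hi
      obtain ⟨hTne, hUne, hTU⟩ := hi
      obtain ⟨p, hTi⟩ := Option.ne_none_iff_exists'.mp hTne
      obtain ⟨q, hUi⟩ := Option.ne_none_iff_exists'.mp hUne
      have hpq : p ≠ q := fun h => hTU (by rw [hTi, hUi, h])
      have herase : ((Finset.univ.filter
          (fun l => T l ≠ none ∧ U l ≠ none ∧ T l ≠ U l)).erase i).card ≤ d := by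
        rw [Finset.card_erase_of_mem himem]
        omega
      have hsub : (Finset.univ.filter
            (fun l => T l ≠ none ∧ Function.update U i none l ≠ none ∧
              T l ≠ Function.update U i none l)) ⊆
          (Finset.univ.filter (fun l => T l ≠ none ∧ U l ≠ none ∧ T l ≠ U l)).erase i := by
        intro x hx
        simp only [Finset.mem_filter, Finset.mem_univ, true_and] at hx
        obtain ⟨h1, h2, h3⟩ := hx
        have hxi : x ≠ i := fun h => by
          subst h; exact h2 (Function.update_self _ _ _)
        rw [Function.update_of_ne hxi] at h2 h3
        refine Finset.mem_erase.mpr ⟨hxi, ?_⟩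
        simp only [Finset.mem_filter, Finset.mem_univ, true_and]
        exact ⟨h1, h2, h3⟩
      have h1 := ih T (Function.update U i none)
        (le_trans (Finset.card_le_card hsub) herase)
      have hme : vmeet T (Function.update U i none) = vmeet T U := by
        funext x
        show tmeet (T x) (Function.update U i none x) = tmeet (T x) (U x)
        by_cases hx : x = i
        · subst hx
          rw [Function.update_self, tmeet_none_right', hTi, hUi, tmeet_ss' hpq]
        · rw [Function.update_of_ne hx]
      have hjo : vjoin T (Function.update U i none) =
          Function.update (vjoin T U) i (some p) := by
        funext x
        show tjoin (T x) (Function.update U i none x) =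
          Function.update (vjoin T U) i (some p) x
        by_cases hx : x = i
        · subst hx
          rw [Function.update_self, Function.update_self, tjoin_none_right', hTi]
        · rw [Function.update_of_ne hx, Function.update_of_ne hx]
          rfl
      have hcompQU : Compatible (vjoin T U) U := by
        intro x
        show tjoin (T x) (U x) = none ∨ U x = none ∨ tjoin (T x) (U x) = U x
        cases hTx : T x with
        | none => right; right; rw [tjoin_none_left']
        | some a =>
          cases hUx : U x with
          | none => right; left; rfl
          | some b =>
            by_cases hab : a = b
            · subst hab; right; right; rw [tjoin_self']
            · left; rw [tjoin_ss' hab]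
      have hQi : vjoin T U i = none := by
        show tjoin (T i) (U i) = none
        rw [hTi, hUi, tjoin_ss' hpq]
      have h2 := lemB f Hi Hii
        (Finset.univ.filter (fun l => l ≠ i ∧ (vjoin T U) l ≠ U l)).card
        (vjoin T U) U i p q le_rfl hcompQU hQi hUi hpq
      rw [hme, hjo] at h1
      linarith


/-- `f` is `k`-submodular iff the submodularity inequality holds
(i) for all compatible `T, U` and (ii) for all `ī`-similar `T, U` whose `i`-th
coordinates are two distinct leaves. -/
theorem stmt17 (k n : ℕ) (hk : 1 ≤ k) (hn : 1 ≤ n)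
    (f : (Fin n → KTree k) → ℝ) :
    KSubmodular f ↔
      ((∀ T U, Compatible T U →
          f (vmeet T U) + f (vjoin T U) ≤ f T + f U) ∧
       (∀ (i : Fin n) (T U : Fin n → KTree k) (p q : Fin k), ISimilar i T U →
          T i = some p → U i = some q → p ≠ q →
          f (vmeet T U) + f (vjoin T U) ≤ f T + f U)) := by
  constructor
  · intro h
    exact ⟨fun T U _ => h T U, fun i T U p q _ _ _ _ => h T U⟩
  · rintro ⟨Hi, Hii⟩ T U
    exact mainLem f Hi Hii _ T U le_rfl
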